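/- arXiv:1801.03176 — 6 statements merged into one kernel-verified Lean document; each statement's English description precedes it below -/
import Mathlib

section
/- Fix a prime power N = p^α with p an odd prime and α even, say N = d² with d = p^{α/2}. Let n ≥ 2, let h(ω) = ω₁² + ... + ω_{n-1}², and consider E1(x) := N^{-(n-1)} Σ_{ω ∈ (Z/NZ)^{n-1}} e^{2πi(x'·ω + x_n h(ω))/N} for x = (x', x_n) ∈ (Z/NZ)^n. If x satisfies gcd(x_1,...,x_n,N) = 1, then |E1(x)| ≤ d^{-(n-1)} = N^{-(n-1)/2}. -/
open Complex Finset

open scoped ComplexConjugate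

/-! The sum over `ω` factors into `n - 1` quadratic Gauss sums `∑ₜ ψ(aᵢ t + b t²)`, where
`ψ(t) = e^{2πit/N}`, `aᵢ = xᵢ` and `b = xₙ`. If `b` is a unit then so is `2b` (`p` is odd), and
each factor has modulus exactly `√N`. Otherwise `p ∣ b`, and the gcd condition makes some `aᵢ` a
unit; the shift `t ↦ t + p^{2β-1}` then leaves `b t²` unchanged modulo `N` and multiplies that
factor by `ψ(aᵢ p^{2β-1}) ≠ 1`, so it vanishes. -/

lemma AddChar.map_sum_eq_prod {A M ι : Type*} [AddCommMonoid A] [CommMonoid M]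
    (ψ : AddChar A M) (s : Finset ι) (f : ι → A) :
    ψ (∑ i ∈ s, f i) = ∏ i ∈ s, ψ (f i) :=
  map_prod ψ.toMonoidHom (fun i => Multiplicative.ofAdd (f i)) s

lemma ZMod.isUnit_iff_not_dvd_val {p k : ℕ} [NeZero (p ^ k)] (hp : p.Prime) (hk : 0 < k)
    (z : ZMod (p ^ k)) :
    IsUnit z ↔ ¬ p ∣ z.val := by
  rw [← isUnit_natCast_iff_not_dvd_pow hp hk, natCast_zmod_val]

lemma ZMod.stdAddChar_natCast {N : ℕ} [NeZero N] (m : ℕ) :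
    stdAddChar (m : ZMod N) = exp (2 * Real.pi * I * m / N) := by
  exact_mod_cast stdAddChar_coe (N := N) m

section QuadGaussSum

variable {N : ℕ} [NeZero N]

noncomputable def quadGaussSum (a b : ZMod N) : ℂ :=
  ∑ t : ZMod N, ZMod.stdAddChar (a * t + b * t ^ 2)

/- Substituting `t = s + h`, the square `∑ₛ ∑ₜ ψ(f t - f s)` becomes
`∑ₕ ψ(f h) ∑ₛ ψ(2bh · s)`, and the inner sum vanishes unless `2bh = 0`, i.e. `h = 0`. -/
lemma quadGaussSum_mul_conj (a b : ZMod N) (hb : IsUnit (2 * b)) :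
    quadGaussSum a b * conj (quadGaussSum a b) = N := by
  set ψ := (ZMod.stdAddChar : AddChar (ZMod N) ℂ)
  set f : ZMod N → ZMod N := fun t => a * t + b * t ^ 2
  have hshift : ∀ s h : ZMod N, f (s + h) - f s = f h + 2 * b * h * s := fun s h => by
    simp only [f]; ring
  calc quadGaussSum a b * conj (quadGaussSum a b)
      = ∑ s : ZMod N, ∑ h : ZMod N, ψ (f (s + h) - f s) := by
        rw [quadGaussSum, map_sum, sum_mul_sum, sum_comm]
        refine sum_congr rfl fun s _ => ?_
        rw [← Equiv.sum_comp (Equiv.addLeft s)]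
        refine sum_congr rfl fun h _ => ?_
        rw [← AddChar.map_neg_eq_conj, ← AddChar.map_add_eq_mul, ← sub_eq_add_neg]
        rfl
    _ = ∑ h : ZMod N, ψ (f h) * ∑ s : ZMod N, ψ (s * (2 * b * h)) := by
        rw [sum_comm]
        refine sum_congr rfl fun h _ => ?_
        rw [mul_sum]
        refine sum_congr rfl fun s _ => ?_
        rw [hshift, AddChar.map_add_eq_mul, mul_comm s]
    _ = ∑ h : ZMod N, ψ (f h) * (if 2 * b * h = 0 then (N : ℂ) else 0) := by
        refine sum_congr rfl fun h _ => ?_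
        rw [AddChar.sum_mulShift _ (ZMod.isPrimitive_stdAddChar N), ZMod.card]
        push_cast
        rfl
    _ = N := by
        simp [hb.mul_right_eq_zero, f]

lemma norm_quadGaussSum (a b : ZMod N) (hb : IsUnit (2 * b)) :
    ‖quadGaussSum a b‖ = √N := by
  have h := quadGaussSum_mul_conj a b hb
  rw [mul_conj, ← ofReal_natCast, ofReal_inj] at h
  rw [norm_def, h]

lemma quadGaussSum_eq_zero_of_mul_eq_zero {a b M : ZMod N} (hbM : b * M = 0) (haM : a * M ≠ 0) :
    quadGaussSum a b = 0 := by
  set ψ := (ZMod.stdAddChar : AddChar (ZMod N) ℂ)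
  have hψ : ψ (a * M) ≠ 1 := by
    rw [← ψ.map_zero_eq_one, ZMod.injective_stdAddChar.ne_iff]
    exact haM
  have hshift : quadGaussSum a b = ψ (a * M) * quadGaussSum a b := by
    conv_lhs => rw [quadGaussSum, ← Equiv.sum_comp (Equiv.addRight M)]
    rw [quadGaussSum, mul_sum]
    refine sum_congr rfl fun t _ => ?_
    rw [← AddChar.map_add_eq_mul, Equiv.coe_addRight]
    congr 1
    linear_combination (2 * t + M) * hbM
  have : (1 - ψ (a * M)) * quadGaussSum a b = 0 := by
    linear_combination hshift
  exact (mul_eq_zero.mp this).resolve_left (sub_ne_zero.mpr hψ.symm)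

lemma quadGaussSum_eq_zero_of_not_isUnit {p k : ℕ} [NeZero (p ^ k)] (hp : p.Prime) (hk : 0 < k)
    {a b : ZMod (p ^ k)} (ha : IsUnit a) (hb : ¬ IsUnit b) : quadGaussSum a b = 0 := by
  obtain ⟨c, hc⟩ : p ∣ b.val := by rwa [ZMod.isUnit_iff_not_dvd_val hp hk, not_not] at hb
  have hpow : p * p ^ (k - 1) = p ^ k := by rw [← pow_succ']; congr 1; omega
  refine quadGaussSum_eq_zero_of_mul_eq_zero (M := ((p ^ (k - 1) : ℕ) : ZMod (p ^ k))) ?_ ?_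
  · rw [← ZMod.natCast_zmod_val b, hc, ← Nat.cast_mul, ZMod.natCast_eq_zero_iff]
    exact ⟨c, by rw [← hpow]; ring⟩
  · rw [Ne, ha.mul_right_eq_zero, ZMod.natCast_eq_zero_iff,
      Nat.pow_dvd_pow_iff_le_right hp.one_lt]
    omega

variable {ι : Type*} [Fintype ι]

lemma sum_exp_eq_prod_quadGaussSum [DecidableEq ι] (a : ι → ZMod N) (b : ZMod N) :
    ∑ ω : ι → ZMod N, exp (2 * Real.pi * I *
        (((∑ i, (a i).val * (ω i).val) + b.val * ∑ i, (ω i).val ^ 2 : ℕ) : ℂ) / N)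
      = ∏ i, quadGaussSum (a i) b := by
  simp only [quadGaussSum]
  rw [Fintype.prod_sum]
  refine sum_congr rfl fun ω _ => ?_
  rw [← ZMod.stdAddChar_natCast, ← AddChar.map_sum_eq_prod]
  push_cast [ZMod.natCast_val, ZMod.cast_id]
  rw [mul_sum, ← sum_add_distrib]

lemma norm_prod_quadGaussSum_le {p k : ℕ} [NeZero (p ^ k)] (hp : p.Prime) (hodd : p ≠ 2)
    (hk : 0 < k) (a : ι → ZMod (p ^ k)) (b : ZMod (p ^ k)) (h : IsUnit b ∨ ∃ i, IsUnit (a i)) :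
    ‖∏ i, quadGaussSum (a i) b‖ ≤ √((p ^ k : ℕ) : ℝ) ^ Fintype.card ι := by
  by_cases hb : IsUnit b
  · have h2 : IsUnit (2 : ZMod (p ^ k)) := by
      exact_mod_cast (ZMod.isUnit_natCast_iff_not_dvd_pow hp hk).mpr
        fun h => hodd ((Nat.prime_dvd_prime_iff_eq hp Nat.prime_two).mp h)
    simp [norm_prod, norm_quadGaussSum _ _ (h2.mul hb)]
  · obtain ⟨i, hi⟩ := h.resolve_left hb
    rw [prod_eq_zero (mem_univ i) (quadGaussSum_eq_zero_of_not_isUnit hp hk hi hb),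
      norm_zero]
    positivity

lemma isUnit_or_exists_isUnit_of_gcd_eq_one {p k : ℕ} [NeZero (p ^ k)] (hp : p.Prime)
    (hk : 0 < k) (a : ι → ZMod (p ^ k)) (b : ZMod (p ^ k))
    (h : Nat.gcd (Nat.gcd (univ.gcd fun i => (a i).val) b.val) (p ^ k) = 1) :
    IsUnit b ∨ ∃ i, IsUnit (a i) := by
  by_contra! hnu
  simp only [ZMod.isUnit_iff_not_dvd_val hp hk, not_not] at hnu
  have : p ∣ 1 := h ▸ Nat.dvd_gcd (Nat.dvd_gcd (dvd_gcd fun i _ => hnu.2 i) hnu.1)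
    (dvd_pow_self p hk.ne')
  exact hp.one_lt.ne' (Nat.dvd_one.mp this)

end QuadGaussSum

theorem stmt_8_general (p β n : ℕ) (hp : p.Prime) (hodd : p ≠ 2) (hβ : 0 < β)
    [NeZero (p ^ (2 * β))]
    (x' : Fin (n - 1) → ZMod (p ^ (2 * β))) (xn : ZMod (p ^ (2 * β)))
    (hx : Nat.gcd (Nat.gcd (Finset.univ.gcd fun i => (x' i).val) xn.val)
        (p ^ (2 * β)) = 1) :
    ‖(((p ^ (2 * β) : ℕ) : ℂ) ^ (n - 1))⁻¹ *
        ∑ ω : Fin (n - 1) → ZMod (p ^ (2 * β)),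
          Complex.exp (2 * Real.pi * Complex.I *
            (((∑ i, (x' i).val * (ω i).val) + xn.val * ∑ i, (ω i).val ^ 2 : ℕ) : ℂ) /
              ((p ^ (2 * β) : ℕ) : ℂ))‖
      ≤ (((p : ℝ) ^ β)⁻¹) ^ (n - 1) := by
  have hk : 0 < 2 * β := by omega
  have hsqrt : √((p ^ (2 * β) : ℕ) : ℝ) = (p : ℝ) ^ β := by
    rw [Nat.cast_pow, pow_mul', Real.sqrt_sq (by positivity)]
  have hprod := norm_prod_quadGaussSum_le hp hodd hk x' xn
    (isUnit_or_exists_isUnit_of_gcd_eq_one hp hk x' xn hx)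
  rw [sum_exp_eq_prod_quadGaussSum, norm_mul, norm_inv, norm_pow, norm_natCast]
  rw [hsqrt, Fintype.card_fin] at hprod
  calc _ ≤ (((p ^ (2 * β) : ℕ) : ℝ) ^ (n - 1))⁻¹ * ((p : ℝ) ^ β) ^ (n - 1) := by gcongr
    _ = _ := by
      have : ((p : ℝ) ^ β) ≠ 0 := pow_ne_zero _ (Nat.cast_ne_zero.mpr hp.ne_zero)
      rw [Nat.cast_pow, pow_mul', ← inv_pow, ← inv_pow, ← mul_pow]
      field_simp

/-- Decay of the extension of constants on the paraboloid over `ℤ/Nℤ` for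
`N = p^(2β) = d²` an odd prime power which is a perfect square: if
`gcd(x₁,…,xₙ,N) = 1` then
`|N^{-(n-1)} ∑_ω e^{2πi(x'·ω + xₙ(ω₁²+⋯+ω_{n-1}²))/N}| ≤ d^{-(n-1)} = N^{-(n-1)/2}`. -/
theorem stmt_8 (p β n : ℕ) (hp : p.Prime) (hodd : p ≠ 2) (hβ : 0 < β) (hn : 2 ≤ n)
    [NeZero (p ^ (2 * β))]
    (x' : Fin (n - 1) → ZMod (p ^ (2 * β))) (xn : ZMod (p ^ (2 * β)))
    (hx : Nat.gcd (Nat.gcd (Finset.univ.gcd fun i => (x' i).val) xn.val)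
        (p ^ (2 * β)) = 1) :
    ‖(((p ^ (2 * β) : ℕ) : ℂ) ^ (n - 1))⁻¹ *
        ∑ ω : Fin (n - 1) → ZMod (p ^ (2 * β)),
          Complex.exp (2 * Real.pi * Complex.I *
            (((∑ i, (x' i).val * (ω i).val) + xn.val * ∑ i, (ω i).val ^ 2 : ℕ) : ℂ) /
              ((p ^ (2 * β) : ℕ) : ℂ))‖
      ≤ (((p : ℝ) ^ β)⁻¹) ^ (n - 1) :=
  stmt_8_general p β n hp hodd hβ x' xn hx
end

section
/- Let N, n ≥ 2 and define the angle between ω, ω' ∈ P^{n-1}(Z/NZ) by ∠(ω,ω') := max over 1 ≤ i < j ≤ n of |ω_i ω_j' - ω_j ω_i'|, where (ω_1,...,ω_n) and (ω_1',...,ω_n') are any class representatives and |y| := N/gcd(y,N). If ℓ_ω = {tω̄ + v : t ∈ Z/NZ} and ℓ_{ω'} = {t'ω̄' + v' : t' ∈ Z/NZ} are lines in (Z/NZ)^n in the directions ω, ω', then |ℓ_ω ∩ ℓ_{ω'}| ≤ N / ∠(ω,ω'). -/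
open Finset

lemma card_ker_aux (N : ℕ) (hN : 0 < N) (d : ZMod N) :
    Nat.card {t : ZMod N // t * d = 0} = Nat.gcd d.val N := by
  haveI : NeZero N := ⟨hN.ne'⟩
  let φ : ZMod N →+ ZMod N := AddMonoidHom.mulRight d
  have hker : {t : ZMod N // t * d = 0} = ↥φ.ker := by
    simp [φ, AddMonoidHom.mem_ker]
  have hrange : φ.range = AddSubgroup.zmultiples d := by
    ext x
    simp only [AddMonoidHom.mem_range, AddSubgroup.mem_zmultiples_iff]
    constructor
    · rintro ⟨t, rfl⟩
      exact ⟨(t.val : ℤ), by push_cast [φ]; simp [zsmul_eq_mul, ZMod.natCast_val, ZMod.cast_id]⟩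
    · rintro ⟨k, rfl⟩
      exact ⟨(k : ZMod N), by simp [φ, zsmul_eq_mul]⟩
  have hcard_range : Nat.card φ.range = N / Nat.gcd d.val N := by
    have hdc : ((d.val : ℕ) : ZMod N) = d := by rw [ZMod.natCast_val, ZMod.cast_id]
    rw [hrange, Nat.card_zmultiples]
    conv_lhs => rw [← hdc]
    rw [ZMod.addOrderOf_coe _ hN.ne', Nat.gcd_comm]
  have h1 : Nat.card φ.ker * (N / Nat.gcd d.val N) = N := by
    have := AddSubgroup.card_mul_index φ.ker
    rwa [AddSubgroup.index_ker, hcard_range, Nat.card_zmod] at this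
  have hg : Nat.gcd d.val N ∣ N := Nat.gcd_dvd_right _ _
  have hgN : 0 < N / Nat.gcd d.val N :=
    Nat.div_pos (Nat.le_of_dvd hN hg) (Nat.gcd_pos_of_pos_right _ hN)
  have h2 : N / (N / Nat.gcd d.val N) = Nat.card φ.ker :=
    Nat.div_eq_of_eq_mul_left hgN h1.symm
  rw [hker, ← h2, Nat.div_div_self hg hN.ne']

lemma card_sol_aux (N : ℕ) (hN : 0 < N) (d e : ZMod N) :
    Nat.card {t : ZMod N // t * d = e} ≤ Nat.gcd d.val N := by
  haveI : NeZero N := ⟨hN.ne'⟩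
  rcases isEmpty_or_nonempty {t : ZMod N // t * d = e} with h | ⟨⟨t₀, ht₀⟩⟩
  · simp [Nat.card_of_isEmpty]
  · rw [← card_ker_aux N hN d]
    apply Nat.card_le_card_of_injective
      (fun x => (⟨x.1 - t₀, by rw [sub_mul, x.2, ht₀, sub_self]⟩ :
        {t : ZMod N // t * d = 0}))
    intro a b hab
    simpa [Subtype.ext_iff, sub_left_inj] using hab

/-- Direction-separated lines in `(ℤ/Nℤ)ⁿ` intersect in at most `N/∠(ω,ω')`
points, where the angle between directions with representatives `ω̄, ω̄'` is
`∠(ω,ω') = max_{i<j} |ω̄_i ω̄'_j - ω̄_j ω̄'_i|` and `|y| = N / gcd(y, N)`. -/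
theorem stmt_12 (N n : ℕ) (hN : 0 < N) (hn : 2 ≤ n)
    (w w' : Fin n → ZMod N) (hw : ∃ i, IsUnit (w i)) (hw' : ∃ i, IsUnit (w' i))
    (v v' : Fin n → ZMod N) :
    Nat.card (({x | ∃ t : ZMod N, x = fun i => t * w i + v i} ∩
        {x | ∃ t : ZMod N, x = fun i => t * w' i + v' i}) : Set (Fin n → ZMod N))
      ≤ N / ((Finset.univ.filter fun q : Fin n × Fin n => q.1 < q.2).sup
          fun q => N / Nat.gcd (w q.1 * w' q.2 - w q.2 * w' q.1).val N) := by
  haveI : NeZero N := ⟨hN.ne'⟩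
  set F := (Finset.univ.filter fun q : Fin n × Fin n => q.1 < q.2) with hF
  have hFne : F.Nonempty := by
    refine ⟨(⟨0, by omega⟩, ⟨1, by omega⟩), ?_⟩
    simp only [hF, Finset.mem_filter, Finset.mem_univ, true_and]
    exact Fin.mk_lt_mk.mpr (by omega)
  obtain ⟨q, hq, hsup⟩ := Finset.exists_mem_eq_sup F hFne
    (fun q => N / Nat.gcd (w q.1 * w' q.2 - w q.2 * w' q.1).val N)
  set i := q.1
  set j := q.2
  set d := w i * w' j - w j * w' i with hd
  set g := Nat.gcd d.val N with hg
  set e := (v' i - v i) * w' j - (v' j - v j) * w' i with he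
  have hgdvd : g ∣ N := Nat.gcd_dvd_right _ _
  rw [hsup, Nat.div_div_self hgdvd hN.ne']
  calc Nat.card (({x | ∃ t : ZMod N, x = fun i => t * w i + v i} ∩
        {x | ∃ t : ZMod N, x = fun i => t * w' i + v' i}) : Set (Fin n → ZMod N))
      ≤ Nat.card {t : ZMod N // t * d = e} := by
        apply Nat.card_le_card_of_injective (fun x => (⟨x.2.1.choose, by
          obtain ⟨x, hx1, hx2⟩ := x
          have ht : x = fun k => hx1.choose * w k + v k := hx1.choose_spec
          obtain ⟨t', ht'⟩ := hx2
          have hi := congrFun ht i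
          have hj := congrFun ht j
          have hi' := congrFun ht' i
          have hj' := congrFun ht' j
          rw [hi'] at hi
          rw [hj'] at hj
          rw [hd, he]
          linear_combination (w' i) * hj - (w' j) * hi⟩ : {t : ZMod N // t * d = e}))
        intro a b hab
        have ha : a.1 = fun k => a.2.1.choose * w k + v k := a.2.1.choose_spec
        have hb : b.1 = fun k => b.2.1.choose * w k + v k := b.2.1.choose_spec
        have : a.2.1.choose = b.2.1.choose := congrArg Subtype.val hab
        ext1
        rw [ha, hb, this]
    _ ≤ g := card_sol_aux N hN d e
end

section
/- Let N, n ≥ 2 and let ℓ_ω, ℓ_{ω'} be lines in (Z/NZ)^n in directions ω, ω' ∈ P^{n-1}(Z/NZ). If there exist points x, y ∈ ℓ_ω ∩ ℓ_{ω'} with gcd(x₁ - y₁, ..., x_n - y_n, N) = 1, then ℓ_ω = ℓ_{ω'} (as subsets of (Z/NZ)^n). -/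
open Finset

/-- If two lines in `(ℤ/Nℤ)ⁿ` (in directions given by sphere vectors `w, w'`)
share two points `x, y` with `gcd(x₁-y₁, …, xₙ-yₙ, N) = 1`, then the lines
coincide. -/
theorem stmt_13 (N n : ℕ) (hN : 0 < N) (hn : 2 ≤ n)
    (w w' : Fin n → ZMod N) (hw : ∃ i, IsUnit (w i)) (hw' : ∃ i, IsUnit (w' i))
    (v v' : Fin n → ZMod N) (x y : Fin n → ZMod N)
    (hx : x ∈ ({z | ∃ t : ZMod N, z = fun i => t * w i + v i} ∩
        {z | ∃ t : ZMod N, z = fun i => t * w' i + v' i} : Set (Fin n → ZMod N)))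
    (hy : y ∈ ({z | ∃ t : ZMod N, z = fun i => t * w i + v i} ∩
        {z | ∃ t : ZMod N, z = fun i => t * w' i + v' i} : Set (Fin n → ZMod N)))
    (hsep : Nat.gcd (Finset.univ.gcd fun i => (x i - y i).val) N = 1) :
    ({z | ∃ t : ZMod N, z = fun i => t * w i + v i} : Set (Fin n → ZMod N))
      = {z | ∃ t : ZMod N, z = fun i => t * w' i + v' i} := by
  haveI : NeZero N := ⟨hN.ne'⟩
  obtain ⟨⟨t1, hxw⟩, ⟨s1, hxw'⟩⟩ := hx
  obtain ⟨⟨t2, hyw⟩, ⟨s2, hyw'⟩⟩ := hy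
  have hdiff : ∀ i, x i - y i = (t1 - t2) * w i := by
    intro i; simp only [hxw, hyw]; ring
  have hdiff' : ∀ i, x i - y i = (s1 - s2) * w' i := by
    intro i; simp only [hxw', hyw']; ring
  have key : ∀ (c : ZMod N) (u : Fin n → ZMod N),
      (∀ i, x i - y i = c * u i) → IsUnit c := by
    intro c u h
    have hco : Nat.Coprime (ZMod.val c) N := by
      by_contra hco
      obtain ⟨p, hp, hpg⟩ := Nat.exists_prime_and_dvd (fun h1 => hco h1)
      have hpN : p ∣ N := hpg.trans (Nat.gcd_dvd_right _ _)
      have hpc : p ∣ ZMod.val c := hpg.trans (Nat.gcd_dvd_left _ _)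
      have hall : ∀ i, p ∣ (x i - y i).val := by
        intro i
        rw [h i, ZMod.val_mul]
        exact (Nat.dvd_mod_iff hpN).mpr (hpc.mul_right _)
      have hdg : p ∣ Nat.gcd (Finset.univ.gcd fun i => (x i - y i).val) N :=
        Nat.dvd_gcd (Finset.dvd_gcd fun i _ => hall i) hpN
      rw [hsep] at hdg
      exact hp.one_lt.ne' (Nat.dvd_one.mp hdg)
    have h2 := (ZMod.isUnit_iff_coprime (ZMod.val c) N).mpr hco
    rwa [ZMod.natCast_val, ZMod.cast_id] at h2
  obtain ⟨au, hau⟩ := key (t1 - t2) w hdiff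
  obtain ⟨bu, hbu⟩ := key (s1 - s2) w' hdiff'
  have hab : ∀ i, (t1 - t2) * w i = (s1 - s2) * w' i := by
    intro i; rw [← hdiff i, ← hdiff' i]
  have hxi : ∀ i, t1 * w i + v i = s1 * w' i + v' i := by
    intro i
    have : x i = x i := rfl
    conv_lhs at this => rw [hxw]
    conv_rhs at this => rw [hxw']
    simpa using this
  have hbinv : (↑bu⁻¹ : ZMod N) * (s1 - s2) = 1 := by rw [← hbu]; exact bu.inv_mul
  have hainv : (↑au⁻¹ : ZMod N) * (t1 - t2) = 1 := by rw [← hau]; exact au.inv_mul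
  ext z
  simp only [Set.mem_setOf_eq]
  constructor
  · rintro ⟨t, rfl⟩
    refine ⟨(t - t1) * ↑au⁻¹ * (s1 - s2) + s1, funext fun i => ?_⟩
    have h1 := hab i
    have h2 := hxi i
    have h3 := hainv
    linear_combination (t - t1) * ↑au⁻¹ * h1 - (t - t1) * w i * h3 + h2
  · rintro ⟨t, rfl⟩
    refine ⟨(t - s1) * ↑bu⁻¹ * (t1 - t2) + t1, funext fun i => ?_⟩
    have h1 := hab i
    have h2 := hxi i
    have h3 := hbinv
    linear_combination -(t - s1) * ↑bu⁻¹ * h1 - (t - s1) * w' i * h3 - h2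
end

section
/- Let n ≥ 2 and N a positive integer. For every ε > 0 there exists a constant C_ε depending only on n and ε such that for every ω ∈ P^{n-1}(Z/NZ) and every divisor d of N, the number of ω' ∈ P^{n-1}(Z/NZ) with ∠(ω,ω') = d is at most C_ε N^{n-2+ε} d. -/
open Finset

/-- The sphere `S^{n-1}(ℤ/Nℤ)`: vectors with at least one invertible component. -/
def ZModSphere (N n : ℕ) : Type :=
  {v : Fin n → ZMod N // ∃ i, IsUnit (v i)}

/-- The orbit relation of the unit group acting on the sphere by componentwise
multiplication. -/
def ZModProjRel (N n : ℕ) (v w : ZModSphere N n) : Prop :=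
  ∃ u : (ZMod N)ˣ, ∀ i, (u : ZMod N) * v.1 i = w.1 i

/-- The projective space `P^{n-1}(ℤ/Nℤ)`. -/
def ZModProj (N n : ℕ) : Type :=
  Quot (ZModProjRel N n)

/-- The angle `∠(ω,ω') = max_{i<j} |ω_i ω'_j - ω_j ω'_i|` computed for
representatives, with `|y| := N / gcd(y, N)`. -/
def ZModAngle (N n : ℕ) (w w' : Fin n → ZMod N) : ℕ :=
  (Finset.univ.filter fun q : Fin n × Fin n => q.1 < q.2).sup
    fun q => N / Nat.gcd (w q.1 * w' q.2 - w q.2 * w' q.1).val N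

section Aux

variable {N : ℕ} [NeZero N]

lemma norm_eq_addOrderOf (y : ZMod N) : N / Nat.gcd y.val N = addOrderOf y := by
  rw [Nat.gcd_comm, ← ZMod.addOrderOf_coe y.val (NeZero.ne N), ZMod.natCast_val, ZMod.cast_id]

lemma norm_unit_mul (u : (ZMod N)ˣ) (y : ZMod N) :
    N / Nat.gcd ((u : ZMod N) * y).val N = N / Nat.gcd y.val N := by
  rw [norm_eq_addOrderOf, norm_eq_addOrderOf]
  have hinj : Function.Injective (fun x : ZMod N => (u : ZMod N) * x) :=
    fun a b h => by simpa using congrArg (fun z => ((u⁻¹ : (ZMod N)ˣ) : ZMod N) * z) h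
  exact addOrderOf_injective (AddMonoidHom.mulLeft (u : ZMod N)) hinj y

lemma angle_unit_mul {n : ℕ} (w w' : Fin n → ZMod N) (u : (ZMod N)ˣ) :
    ZModAngle N n w (fun i => (u : ZMod N) * w' i) = ZModAngle N n w w' := by
  unfold ZModAngle
  refine Finset.sup_congr rfl fun q _ => ?_
  have : w q.1 * ((u : ZMod N) * w' q.2) - w q.2 * ((u : ZMod N) * w' q.1)
      = (u : ZMod N) * (w q.1 * w' q.2 - w q.2 * w' q.1) := by ring
  rw [this, norm_unit_mul]

instance sphereFinite {N n : ℕ} [NeZero N] : Finite (ZModSphere N n) := by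
  unfold ZModSphere; infer_instance

instance projFinite {N n : ℕ} [NeZero N] : Finite (ZModProj N n) := by
  unfold ZModProj; exact Quot.finite _

/-- Orbit counting: the number of projective points with given angle to `w`,
multiplied by the number of units, is at most the number of sphere points with
that angle. -/
lemma step1 {n : ℕ} (w : Fin n → ZMod N) (d : ℕ) :
    Nat.card {q : ZModProj N n //
        ∃ w' : ZModSphere N n, q = Quot.mk _ w' ∧ ZModAngle N n w w'.1 = d} * N.totient
      ≤ Nat.card {w' : Fin n → ZMod N // (∃ i, IsUnit (w' i)) ∧ ZModAngle N n w w' = d} := by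
  set T := {q : ZModProj N n //
      ∃ w' : ZModSphere N n, q = Quot.mk _ w' ∧ ZModAngle N n w w'.1 = d}
  set S := {w' : Fin n → ZMod N // (∃ i, IsUnit (w' i)) ∧ ZModAngle N n w w' = d}
  have hcard : Nat.card T * N.totient = Nat.card (T × (ZMod N)ˣ) := by
    rw [Nat.card_prod, Nat.card_eq_fintype_card (α := (ZMod N)ˣ), ZMod.card_units_eq_totient]
  rw [hcard]
  refine Nat.card_le_card_of_injective
    (fun p : T × (ZMod N)ˣ =>
      (⟨fun i => (p.2 : ZMod N) * p.1.2.choose.1 i,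
        ⟨by obtain ⟨i, hi⟩ := p.1.2.choose.2; exact ⟨i, p.2.isUnit.mul hi⟩,
         by rw [angle_unit_mul]; exact p.1.2.choose_spec.2⟩⟩ : S)) ?_
  rintro ⟨q, u⟩ ⟨q', u'⟩ h
  have hfun : (fun i => (u : ZMod N) * q.2.choose.1 i)
      = (fun i => (u' : ZMod N) * q'.2.choose.1 i) := congrArg Subtype.val h
  have hrel : ZModProjRel N n q.2.choose q'.2.choose := by
    refine ⟨u'⁻¹ * u, fun i => ?_⟩
    have := congrFun hfun i
    calc ((u'⁻¹ * u : (ZMod N)ˣ) : ZMod N) * q.2.choose.1 i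
        = (u'⁻¹ : (ZMod N)ˣ) * ((u : ZMod N) * q.2.choose.1 i) := by
          push_cast; ring
      _ = (u'⁻¹ : (ZMod N)ˣ) * ((u' : ZMod N) * q'.2.choose.1 i) := by rw [this]
      _ = q'.2.choose.1 i := by
          rw [← mul_assoc, ← Units.val_mul, inv_mul_cancel, Units.val_one, one_mul]
  have hq : q = q' := by
    apply Subtype.ext
    rw [q.2.choose_spec.1, q'.2.choose_spec.1]
    exact Quot.sound hrel
  subst hq
  have hu : u = u' := by
    obtain ⟨i, hi⟩ := q.2.choose.2
    have hi' := congrFun hfun i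
    exact Units.ext (hi.mul_left_cancel
      (by rw [mul_comm (q.2.choose.1 i), mul_comm (q.2.choose.1 i), hi']))
  rw [hu]

/-- The number of residues of norm at most `d` is at most `τ(N) d`. -/
lemma cardA (d : ℕ) :
    Nat.card {y : ZMod N // N / Nat.gcd y.val N ≤ d} ≤ N.divisors.card * d := by
  classical
  have hN : 0 < N := Nat.pos_of_ne_zero (NeZero.ne N)
  rw [Nat.card_eq_fintype_card, Fintype.card_subtype]
  have hsub : (univ.filter fun y : ZMod N => N / Nat.gcd y.val N ≤ d)
      ⊆ (N.divisors.filter (· ≤ d)).biUnion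
          (fun e => univ.filter fun y : ZMod N => (N / e) ∣ y.val) := by
    intro y hy
    simp only [mem_filter, mem_univ, true_and] at hy
    simp only [mem_biUnion, mem_filter, mem_univ, true_and, Nat.mem_divisors]
    have hgdvd : Nat.gcd y.val N ∣ N := Nat.gcd_dvd_right _ _
    refine ⟨N / Nat.gcd y.val N, ⟨⟨Nat.div_dvd_of_dvd hgdvd, NeZero.ne N⟩, hy⟩, ?_⟩
    rw [Nat.div_div_self hgdvd (NeZero.ne N)]
    exact Nat.gcd_dvd_left _ _
  calc (univ.filter fun y : ZMod N => N / Nat.gcd y.val N ≤ d).card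
      ≤ _ := Finset.card_le_card hsub
    _ ≤ ∑ e ∈ N.divisors.filter (· ≤ d),
          (univ.filter fun y : ZMod N => (N / e) ∣ y.val).card := Finset.card_biUnion_le
    _ ≤ ∑ _e ∈ N.divisors.filter (· ≤ d), d := by
        refine Finset.sum_le_sum fun e he => ?_
        simp only [mem_filter, Nat.mem_divisors] at he
        obtain ⟨⟨hedvd, _⟩, hed⟩ := he
        have he0 : 0 < e := Nat.pos_of_dvd_of_pos hedvd hN
        have hNe : 0 < N / e := Nat.div_pos (Nat.le_of_dvd hN hedvd) he0
        have : (univ.filter fun y : ZMod N => (N / e) ∣ y.val).card ≤ e := by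
          conv_rhs => rw [← Finset.card_range e]
          refine Finset.card_le_card_of_injOn (fun (y : ZMod N) => y.val / (N / e))
            (fun y hy => ?_) (fun y hy z hz hyz => ?_)
          · simp only [mem_coe, mem_filter, mem_univ, true_and] at hy
            simp only [mem_coe, Finset.mem_range]
            have : y.val < N := ZMod.val_lt y
            have hNe' : (N / e) * e = N := Nat.div_mul_cancel hedvd
            exact Nat.div_lt_of_lt_mul (by omega)
          · simp only [mem_coe, mem_filter, mem_univ, true_and] at hy hz
            have h1 : (N / e) * (y.val / (N / e)) = y.val := Nat.mul_div_cancel' hy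
            have h2 : (N / e) * (z.val / (N / e)) = z.val := Nat.mul_div_cancel' hz
            have : y.val = z.val := by simp only [] at hyz; rw [← h1, ← h2, hyz]
            exact ZMod.val_injective N this
        exact this.trans hed
    _ ≤ (N.divisors.filter (· ≤ d)).card * d := by rw [Finset.sum_const, smul_eq_mul]
    _ ≤ N.divisors.card * d := by
        exact Nat.mul_le_mul_right d (Finset.card_le_card (Finset.filter_subset _ _))

lemma cardFun {n : ℕ} (c : Fin n) :
    Nat.card ({k : Fin n // k ≠ c} → ZMod N) = N ^ (n - 1) := by
  classical
  rw [Nat.card_eq_fintype_card, Fintype.card_fun, ZMod.card]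
  congr 1
  have : Fintype.card {k : Fin n // k ≠ c} = Fintype.card (Fin n) - 1 := by
    rw [Fintype.card_subtype_compl (p := fun k => k = c), Fintype.card_subtype_eq]
  simpa using this

/-- The number of sphere points at angle `d` from `w` is at most `|A| N^{n-1}`,
where `A` is the set of residues of norm at most `d`. -/
lemma step2aux {n : ℕ} (w : Fin n → ZMod N) (a b : Fin n) (hab : a < b)
    (hu : IsUnit (w a) ∨ IsUnit (w b)) (d : ℕ) :
    Nat.card {w' : Fin n → ZMod N // (∃ i, IsUnit (w' i)) ∧ ZModAngle N n w w' = d}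
      ≤ Nat.card {y : ZMod N // N / Nat.gcd y.val N ≤ d} * N ^ (n - 1) := by
  classical
  have hmem : (a, b) ∈ Finset.univ.filter fun q : Fin n × Fin n => q.1 < q.2 := by
    simp [hab]
  have hpf : ∀ s : {w' : Fin n → ZMod N // (∃ i, IsUnit (w' i)) ∧ ZModAngle N n w w' = d},
      N / Nat.gcd (w a * s.1 b - w b * s.1 a).val N ≤ d := fun s => by
    have := Finset.le_sup (f := fun q : Fin n × Fin n =>
      N / Nat.gcd (w q.1 * s.1 q.2 - w q.2 * s.1 q.1).val N) hmem
    rwa [show ((Finset.univ.filter fun q : Fin n × Fin n => q.1 < q.2).sup fun q =>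
      N / Nat.gcd (w q.1 * s.1 q.2 - w q.2 * s.1 q.1).val N) = d from s.2.2] at this
  obtain hua | hub := hu
  · rw [← cardFun (N := N) b, ← Nat.card_prod]
    refine Nat.card_le_card_of_injective (fun s =>
      (⟨w a * s.1 b - w b * s.1 a, hpf s⟩, fun k => s.1 k.1)) ?_
    rintro s t h
    obtain ⟨h1, h2⟩ := Prod.ext_iff.mp h
    have hm : w a * s.1 b - w b * s.1 a = w a * t.1 b - w b * t.1 a :=
      Subtype.ext_iff.mp h1
    have hoff : ∀ k : Fin n, k ≠ b → s.1 k = t.1 k := fun k hk =>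
      congrFun h2 ⟨k, hk⟩
    refine Subtype.ext (funext fun i => ?_)
    by_cases hib : i = b
    · have ha' : s.1 a = t.1 a := hoff a hab.ne
      have hb : w a * s.1 b = w a * t.1 b := by linear_combination hm + w b * ha'
      rw [hib]; exact hua.mul_left_cancel hb
    · exact hoff i hib
  · rw [← cardFun (N := N) a, ← Nat.card_prod]
    refine Nat.card_le_card_of_injective (fun s =>
      (⟨w a * s.1 b - w b * s.1 a, hpf s⟩, fun k => s.1 k.1)) ?_
    rintro s t h
    obtain ⟨h1, h2⟩ := Prod.ext_iff.mp h
    have hm : w a * s.1 b - w b * s.1 a = w a * t.1 b - w b * t.1 a :=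
      Subtype.ext_iff.mp h1
    have hoff : ∀ k : Fin n, k ≠ a → s.1 k = t.1 k := fun k hk =>
      congrFun h2 ⟨k, hk⟩
    refine Subtype.ext (funext fun i => ?_)
    by_cases hia : i = a
    · have hb' : s.1 b = t.1 b := hoff b hab.ne'
      have ha : w b * s.1 a = w b * t.1 a := by
        linear_combination (-1 : ZMod N) * hm + w a * hb'
      rw [hia]; exact hub.mul_left_cancel ha
    · exact hoff i hia

end Aux

lemma le_totient_mul_tau (N : ℕ) (h : N ≠ 0) : N ≤ N.totient * N.divisors.card := by
  conv_lhs => rw [← Nat.sum_totient N]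
  calc N.divisors.sum Nat.totient ≤ ∑ _e ∈ N.divisors, N.totient := by
        refine Finset.sum_le_sum fun e he => ?_
        exact Nat.le_of_dvd (Nat.totient_pos.mpr (Nat.pos_of_ne_zero h))
          (Nat.totient_dvd_of_dvd (Nat.mem_divisors.mp he).1)
    _ = N.divisors.card * N.totient := by rw [Finset.sum_const, smul_eq_mul]
    _ = N.totient * N.divisors.card := Nat.mul_comm _ _

/-- The divisor bound: `τ(N) = O_ε(N^ε)`. -/
lemma tau_le_rpow (ε : ℝ) (hε : 0 < ε) :
    ∃ C : ℝ, 1 ≤ C ∧ ∀ N : ℕ, N ≠ 0 → (N.divisors.card : ℝ) ≤ C * (N : ℝ) ^ ε := by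
  obtain ⟨M, hM⟩ := exists_nat_gt ((2 : ℝ) ^ (1 / ε))
  set K : ℝ := max 1 (2 / (ε * Real.log 2)) with hKdef
  have hK1 : (1 : ℝ) ≤ K := le_max_left _ _
  have hK0 : (0 : ℝ) < K := lt_of_lt_of_le one_pos hK1
  refine ⟨K ^ M, one_le_pow₀ hK1, fun N hN => ?_⟩
  have hlog2 : (0 : ℝ) < Real.log 2 := Real.log_pos (by norm_num)
  have hcast : (N.divisors.card : ℝ)
      = ∏ p ∈ N.primeFactors, ((N.factorization p : ℝ) + 1) := by
    rw [Nat.card_divisors hN]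
    push_cast
    rfl
  have hNfact : (N : ℝ) = ∏ p ∈ N.primeFactors, ((p : ℝ) ^ (N.factorization p)) := by
    conv_lhs => rw [← Nat.factorization_prod_pow_eq_self hN]
    unfold Finsupp.prod
    rw [Nat.support_factorization]
    push_cast
    rfl
  have hrpow : (N : ℝ) ^ ε = ∏ p ∈ N.primeFactors, (((p : ℝ) ^ (N.factorization p)) ^ ε) := by
    rw [hNfact, ← Real.finset_prod_rpow _ _ (fun p _ => by positivity) ε]
  have key : ∀ p ∈ N.primeFactors,
      ((N.factorization p : ℝ) + 1)
        ≤ (if p < M then K else 1) * (((p : ℝ) ^ (N.factorization p)) ^ ε) := by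
    intro p hp
    have hpp : p.Prime := Nat.prime_of_mem_primeFactors hp
    have hp2 : (2 : ℝ) ≤ (p : ℝ) := by exact_mod_cast hpp.two_le
    set a : ℕ := N.factorization p with ha
    have ha1 : 1 ≤ a := (Nat.Prime.factorization_pos_of_dvd hpp hN
      (Nat.dvd_of_mem_primeFactors hp))
    have ha1' : (1 : ℝ) ≤ (a : ℝ) := by exact_mod_cast ha1
    have hx2 : ((2 : ℝ) ^ a) ^ ε ≤ ((p : ℝ) ^ a) ^ ε :=
      Real.rpow_le_rpow (by positivity) (pow_le_pow_left₀ (by norm_num) hp2 a) hε.le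
    by_cases hpM : p < M
    · simp only [if_pos hpM]
      have h2aε : ((2 : ℝ) ^ a) ^ ε = Real.exp (Real.log 2 * ((a : ℝ) * ε)) := by
        rw [← Real.rpow_natCast 2 a, ← Real.rpow_mul (by norm_num),
          Real.rpow_def_of_pos (by norm_num)]
      have hexp : Real.log 2 * ((a : ℝ) * ε) ≤ ((2 : ℝ) ^ a) ^ ε := by
        rw [h2aε]
        have := Real.add_one_le_exp (Real.log 2 * ((a : ℝ) * ε))
        linarith
      have h1 : (a : ℝ) + 1 ≤ 2 * a := by linarith
      have h2 : 2 * (a : ℝ) = (2 / (ε * Real.log 2)) * (Real.log 2 * ((a : ℝ) * ε)) := by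
        field_simp
      have h3 : (2 / (ε * Real.log 2)) * (Real.log 2 * ((a : ℝ) * ε))
          ≤ K * (Real.log 2 * ((a : ℝ) * ε)) :=
        mul_le_mul_of_nonneg_right (le_max_right _ _) (by positivity)
      have h4 : K * (Real.log 2 * ((a : ℝ) * ε)) ≤ K * (((2 : ℝ) ^ a) ^ ε) :=
        mul_le_mul_of_nonneg_left hexp hK0.le
      have h5 : K * (((2 : ℝ) ^ a) ^ ε) ≤ K * (((p : ℝ) ^ a) ^ ε) :=
        mul_le_mul_of_nonneg_left hx2 hK0.le
      linarith
    · simp only [if_neg hpM, one_mul]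
      have hpM' : (2 : ℝ) ^ (1 / ε) < (p : ℝ) := by
        have : (M : ℝ) ≤ (p : ℝ) := by exact_mod_cast Nat.le_of_not_lt hpM
        linarith
      have h2 : (2 : ℝ) < (p : ℝ) ^ ε := by
        have := Real.rpow_lt_rpow (by positivity) hpM' hε
        rwa [← Real.rpow_mul (by norm_num), one_div, inv_mul_cancel₀ hε.ne',
          Real.rpow_one] at this
      have hpow : ((p : ℝ) ^ a) ^ ε = ((p : ℝ) ^ ε) ^ a := by
        rw [← Real.rpow_natCast (p : ℝ) a, ← Real.rpow_mul (by positivity),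
          mul_comm, Real.rpow_mul (by positivity), Real.rpow_natCast]
      rw [hpow]
      calc ((a : ℝ) + 1) ≤ (2 : ℝ) ^ a := by exact_mod_cast (Nat.lt_two_pow_self : a < 2 ^ a)
        _ ≤ ((p : ℝ) ^ ε) ^ a := pow_le_pow_left₀ (by norm_num) h2.le a
  calc (N.divisors.card : ℝ)
      = ∏ p ∈ N.primeFactors, ((N.factorization p : ℝ) + 1) := hcast
    _ ≤ ∏ p ∈ N.primeFactors,
          ((if p < M then K else 1) * (((p : ℝ) ^ (N.factorization p)) ^ ε)) :=
        Finset.prod_le_prod (fun p _ => by positivity) key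
    _ = (∏ p ∈ N.primeFactors, (if p < M then K else 1))
          * ∏ p ∈ N.primeFactors, (((p : ℝ) ^ (N.factorization p)) ^ ε) :=
        Finset.prod_mul_distrib
    _ ≤ K ^ M * (N : ℝ) ^ ε := by
        rw [← hrpow]
        refine mul_le_mul_of_nonneg_right ?_ (by positivity)
        rw [Finset.prod_ite, Finset.prod_const, Finset.prod_const_one, mul_one]
        refine (pow_le_pow_right₀ hK1 ?_)
        have hsub : N.primeFactors.filter (· < M) ⊆ Finset.range M := fun p hp =>
          Finset.mem_range.mpr (Finset.mem_filter.mp hp).2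
        simpa using Finset.card_le_card hsub

/-- For every `n ≥ 2` and `ε > 0` there is `C > 0` such that for all `N`, all
directions `ω ∈ P^{n-1}(ℤ/Nℤ)` and all divisors `d` of `N`, the number of
directions `ω'` with `∠(ω,ω') = d` is at most `C N^{n-2+ε} d`. -/
theorem stmt_14 (n : ℕ) (hn : 2 ≤ n) (ε : ℝ) (hε : 0 < ε) :
    ∃ C : ℝ, 0 < C ∧ ∀ N : ℕ, 1 ≤ N → ∀ w : Fin n → ZMod N, (∃ i, IsUnit (w i)) →
      ∀ d : ℕ, d ∣ N →
        (Nat.card {q : ZModProj N n //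
            ∃ w' : ZModSphere N n, q = Quot.mk _ w' ∧ ZModAngle N n w w'.1 = d} : ℝ)
          ≤ C * (N : ℝ) ^ ((n : ℝ) - 2 + ε) * (d : ℝ) := by
  obtain ⟨C₀, hC₀1, hC₀⟩ := tau_le_rpow (ε / 2) (by linarith)
  refine ⟨C₀ ^ 2, by positivity, fun N hN w hw d hd => ?_⟩
  haveI : NeZero N := ⟨by omega⟩
  have hN0 : (0 : ℝ) < (N : ℝ) := by exact_mod_cast hN
  obtain ⟨i0, hu⟩ := hw
  have h1n : 1 < n := by omega
  have h0n : 0 < n := by omega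
  have hn1 : n - 1 = (n - 2) + 1 := by omega
  have hNpos : 0 < N := by omega
  -- step 2 applied with a suitable ordered pair
  have hstep2 : Nat.card {w' : Fin n → ZMod N // (∃ i, IsUnit (w' i)) ∧ ZModAngle N n w w' = d}
      ≤ Nat.card {y : ZMod N // N / Nat.gcd y.val N ≤ d} * N ^ (n - 1) := by
    rcases Nat.eq_zero_or_pos i0.val with h0 | h0
    · have hab : i0 < (⟨1, h1n⟩ : Fin n) := by
        rw [Fin.lt_def]
        simp [h0]
      exact step2aux w i0 ⟨1, h1n⟩ hab (Or.inl hu) d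
    · have hab : (⟨0, h0n⟩ : Fin n) < i0 := by
        rw [Fin.lt_def]
        simpa using h0
      exact step2aux w ⟨0, h0n⟩ i0 hab (Or.inr hu) d
  set cT := Nat.card {q : ZModProj N n //
      ∃ w' : ZModSphere N n, q = Quot.mk _ w' ∧ ZModAngle N n w w'.1 = d} with hcT
  set τ := N.divisors.card with hτdef
  -- combine the natural-number counting estimates
  have hnat : cT * N ≤ τ * τ * d * N ^ (n - 2) * N := by
    have e1 : cT * N.totient
        ≤ (τ * d) * N ^ (n - 1) := by
      refine (step1 w d).trans (hstep2.trans ?_)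
      exact Nat.mul_le_mul_right _ (cardA d)
    have e2 : N ≤ N.totient * τ := le_totient_mul_tau N (NeZero.ne N)
    have e3 : N ^ (n - 1) = N ^ (n - 2) * N := by
      rw [hn1, pow_succ]
    calc cT * N ≤ cT * (N.totient * τ) := Nat.mul_le_mul_left _ e2
      _ = (cT * N.totient) * τ := by ring
      _ ≤ ((τ * d) * N ^ (n - 1)) * τ := Nat.mul_le_mul_right _ e1
      _ = τ * τ * d * N ^ (n - 2) * N := by rw [e3]; ring
  have hnat' : cT ≤ τ * τ * d * N ^ (n - 2) :=
    Nat.le_of_mul_le_mul_right hnat hNpos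
  -- pass to the reals
  have hreal : (cT : ℝ) ≤ (τ : ℝ) * τ * d * (N : ℝ) ^ (n - 2 : ℕ) := by
    exact_mod_cast hnat'
  have hτle : (τ : ℝ) ≤ C₀ * (N : ℝ) ^ (ε / 2) := hC₀ N (NeZero.ne N)
  have hτ0 : (0 : ℝ) ≤ (τ : ℝ) := Nat.cast_nonneg _
  have hpowrw : (N : ℝ) ^ (n - 2 : ℕ) = (N : ℝ) ^ ((n : ℝ) - 2) := by
    rw [← Real.rpow_natCast (N : ℝ) (n - 2)]
    congr 1
    have : ((n - 2 : ℕ) : ℝ) = (n : ℝ) - 2 := by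
      have : (2 : ℕ) ≤ n := hn
      push_cast [Nat.cast_sub this]
      ring
    rw [this]
  calc (cT : ℝ) ≤ (τ : ℝ) * τ * d * (N : ℝ) ^ ((n : ℝ) - 2) := by rw [← hpowrw]; exact hreal
    _ ≤ (C₀ * (N : ℝ) ^ (ε / 2)) * (C₀ * (N : ℝ) ^ (ε / 2)) * d * (N : ℝ) ^ ((n : ℝ) - 2) := by
        have h1 : (0 : ℝ) ≤ (N : ℝ) ^ ((n : ℝ) - 2) := Real.rpow_nonneg hN0.le _
        have h2 : (0 : ℝ) ≤ (d : ℝ) := Nat.cast_nonneg _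
        have hττ : (τ : ℝ) * τ ≤ (C₀ * (N : ℝ) ^ (ε / 2)) * (C₀ * (N : ℝ) ^ (ε / 2)) :=
          mul_le_mul hτle hτle hτ0 (le_trans hτ0 hτle)
        exact mul_le_mul_of_nonneg_right (mul_le_mul_of_nonneg_right hττ h2) h1
    _ = C₀ ^ 2 * ((N : ℝ) ^ (ε / 2) * (N : ℝ) ^ (ε / 2) * (N : ℝ) ^ ((n : ℝ) - 2)) * d := by
        ring
    _ = C₀ ^ 2 * (N : ℝ) ^ ((n : ℝ) - 2 + ε) * d := by
        rw [← Real.rpow_add hN0, ← Real.rpow_add hN0]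
        ring_nf
end

section
/- For every odd prime p there exist a strictly increasing sequence of integers α(s) and sets K_s ⊆ (Z/p^{α(s)}Z)² such that each K_s contains, for every ω ∈ Z/p^{α(s)}Z, a graph line {(t, tω + c_ω(t)) : t ∈ Z/p^{α(s)}Z} with c_ω(t) independent of t (i.e. a line of slope ω), and |K_s| / p^{2α(s)} ≤ p^{-s}. In particular there are 'Kakeya-type' sets of relative density tending to 0. -/
/-!
Fix `t` with representative `T`, and pick `m < p ^ s` with `p ^ s ∣ T + m`. For `ω` with digits
`ω_j`, `tω + c_ω = Σ_j (T + ⌊j/s⌋) ω_j p^j`. The digits of block `m` (`sm ≤ j < sm + s`) carry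
the weight `T + m ≡ 0 mod p^s`, so all digits from `sm` on contribute a multiple of `p^(sm+s)`.
Hence `φ_ω(t)` is determined by the lowest `sm` digits of `ω` and a residue modulo
`p^(α-sm-s)`: at most `p^(α-s)` values. Since `α = s p^s`, `sm + s ≤ α` for every such `m`,
and summing over the `p^α` values of `t` gives `|K_s| ≤ p^(2α-s)`.
-/

open Finset

theorem Nat.sum_div_pow_mod_mul_pow (p W n : ℕ) :
    ∑ j ∈ range n, W / p ^ j % p * p ^ j = W % p ^ n := by
  induction n with
  | zero => simp [Nat.mod_one]
  | succ n ih => rw [sum_range_succ, ih, Nat.mod_pow_succ, mul_comm]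

theorem Nat.mod_pow_div_pow_mod {p j k : ℕ} (W : ℕ) (hjk : j < k) :
    W % p ^ k / p ^ j % p = W / p ^ j % p := by
  obtain ⟨i, rfl⟩ := Nat.exists_eq_add_of_lt hjk
  rw [add_assoc, pow_add, Nat.mod_mul_right_div_self,
    Nat.mod_mod_of_dvd _ (dvd_pow_self p (by omega))]

theorem Nat.exists_lt_dvd_add {d : ℕ} (hd : 0 < d) (T : ℕ) : ∃ m < d, d ∣ T + m := by
  refine ⟨(d - T % d) % d, Nat.mod_lt _ hd, ?_⟩
  rw [Nat.dvd_iff_mod_eq_zero, Nat.add_mod, Nat.mod_mod]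
  rcases Nat.eq_zero_or_pos (T % d) with h | h
  · simp [h]
  · rw [Nat.mod_eq_of_lt (by omega : d - T % d < d), Nat.add_sub_cancel' (Nat.mod_lt _ hd).le,
      Nat.mod_self]

theorem ZMod.card_range_le_of_eq_add_mul {ι A : Type*} [Finite A] {N d e : ℕ} [NeZero e]
    (hN : d * e = N) (f : ι → ZMod N) (g : A → ZMod N)
    (h : ∀ i, ∃ a, ∃ b : ℕ, f i = g a + d * b) :
    Nat.card (Set.range f) ≤ Nat.card A * e := by
  have hde : (d : ZMod N) * e = 0 := by rw [← Nat.cast_mul, hN, ZMod.natCast_self]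
  have hsub : Set.range f ⊆ Set.range fun q : A × ZMod e => g q.1 + d * q.2.val := by
    rintro _ ⟨i, rfl⟩
    obtain ⟨a, b, hb⟩ := h i
    refine ⟨(a, b), ?_⟩
    conv_rhs => rw [hb, ← Nat.mod_add_div b e]
    simp [ZMod.val_natCast, mul_add, ← mul_assoc, hde]
  calc Nat.card (Set.range f) ≤ Nat.card (A × ZMod e) :=
        (Nat.card_mono (Set.finite_range _) hsub).trans (Finite.card_range_le _)
    _ = Nat.card A * e := by rw [Nat.card_prod, Nat.card_zmod]

/-- The paper's `Σ_{j<n} ⌊j/s⌋ ω_j p^j`, evaluated at the representative `W` of `ω`. -/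
def kakeyaOffset (p s n W : ℕ) : ℕ :=
  ∑ j ∈ range n, j / s * (W / p ^ j % p) * p ^ j

def kakeyaSet (p s n : ℕ) : Set (ZMod (p ^ n) × ZMod (p ^ n)) :=
  Set.range fun q : ZMod (p ^ n) × ZMod (p ^ n) => (q.1, q.1 * q.2 + kakeyaOffset p s n q.2.val)

theorem sum_add_div_mul_digit_eq (p s n T W : ℕ) :
    ∑ j ∈ range n, (T + j / s) * (W / p ^ j % p) * p ^ j
      = T * (W % p ^ n) + kakeyaOffset p s n W := by
  simp only [kakeyaOffset, add_mul, sum_add_distrib, mul_assoc, ← mul_sum,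
    Nat.sum_div_pow_mod_mul_pow]

theorem exists_sum_add_div_mul_digit_eq {p s m n T : ℕ} (hdvd : p ^ s ∣ T + m)
    (hn : s * m + s ≤ n) (W : ℕ) :
    ∃ b, ∑ j ∈ range n, (T + j / s) * (W / p ^ j % p) * p ^ j
      = ∑ j ∈ range (s * m), (T + j / s) * (W % p ^ (s * m) / p ^ j % p) * p ^ j
        + p ^ (s * m + s) * b := by
  rw [← sum_range_add_sum_Ico _ (by omega : s * m ≤ n)]
  have hlow : ∀ j ∈ range (s * m), (T + j / s) * (W / p ^ j % p) * p ^ j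
      = (T + j / s) * (W % p ^ (s * m) / p ^ j % p) * p ^ j := fun j hj => by
    rw [Nat.mod_pow_div_pow_mod W (mem_range.mp hj)]
  have hhigh : p ^ (s * m + s) ∣ ∑ j ∈ Ico (s * m) n, (T + j / s) * (W / p ^ j % p) * p ^ j := by
    refine dvd_sum fun j hj => ?_
    obtain ⟨hmj, -⟩ := mem_Ico.mp hj
    by_cases hj : s * m + s ≤ j
    · exact (pow_dvd_pow p hj).mul_left _
    · have hjm : j / s = m := Nat.div_eq_of_lt_le (by linarith) (by linarith)
      rw [hjm, mul_right_comm, add_comm (s * m), pow_add]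
      exact (mul_dvd_mul hdvd (pow_dvd_pow p hmj)).mul_right _
  obtain ⟨b, hb⟩ := hhigh
  exact ⟨b, by rw [sum_congr rfl hlow, hb]⟩

theorem card_kakeyaSet_column_le {p s n : ℕ} [NeZero p] (hn : s * p ^ s ≤ n) (t : ZMod (p ^ n)) :
    Nat.card (Set.range fun ω : ZMod (p ^ n) => t * ω + kakeyaOffset p s n ω.val)
      ≤ p ^ (n - s) := by
  obtain ⟨m, hm, hdvd⟩ := Nat.exists_lt_dvd_add (pow_pos (NeZero.pos p) s) t.val
  have hmn : s * m + s ≤ n := by nlinarith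
  set k := s * m
  let g : Fin (p ^ k) → ZMod (p ^ n) := fun a =>
    ((∑ j ∈ range k, (t.val + j / s) * (a.val / p ^ j % p) * p ^ j : ℕ) : ZMod (p ^ n))
  have hdecomp : ∀ ω : ZMod (p ^ n), ∃ a, ∃ b : ℕ,
      t * ω + kakeyaOffset p s n ω.val = g a + (p ^ (k + s) : ℕ) * b := fun ω => by
    obtain ⟨b, hb⟩ := exists_sum_add_div_mul_digit_eq hdvd hmn ω.val
    rw [sum_add_div_mul_digit_eq, Nat.mod_eq_of_lt ω.val_lt] at hb
    refine ⟨⟨ω.val % p ^ k, Nat.mod_lt _ (pow_pos (NeZero.pos p) k)⟩, b, ?_⟩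
    simpa [g] using congrArg (Nat.cast : ℕ → ZMod (p ^ n)) hb
  calc _ ≤ Nat.card (Fin (p ^ k)) * p ^ (n - (k + s)) :=
        ZMod.card_range_le_of_eq_add_mul (by rw [← pow_add]; congr 1; omega) _ g hdecomp
    _ = p ^ (n - s) := by rw [Nat.card_fin, ← pow_add]; congr 1; omega

theorem Nat.card_range_prodMk_le {A B C : Type*} [Finite A] [Finite C] (f : A → B → C) {M : ℕ}
    (h : ∀ a, Nat.card (Set.range (f a)) ≤ M) :
    Nat.card (Set.range fun q : A × B => (q.1, f q.1 q.2)) ≤ Nat.card A * M := by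
  have := Fintype.ofFinite A
  have hrange : (Set.range fun q : A × B => (q.1, f q.1 q.2))
      = {x : A × C | x.2 ∈ Set.range (f x.1)} := by
    ext ⟨a, c⟩
    simp [eq_comm]
  calc Nat.card (Set.range fun q : A × B => (q.1, f q.1 q.2))
      = ∑ a, Nat.card (Set.range (f a)) := by
        rw [hrange, ← Nat.card_sigma]
        exact Nat.card_congr (Equiv.subtypeProdEquivSigmaSubtype fun a c => c ∈ Set.range (f a))
    _ ≤ Nat.card A * M := by
        simpa [Nat.card_eq_fintype_card] using Finset.sum_le_card_nsmul univ _ M fun a _ => h a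

theorem stmt_15_general (p : ℕ) (hp : p.Prime) :
    ∃ α : ℕ → ℕ, StrictMono α ∧
      ∃ K : ∀ s : ℕ, Set (ZMod (p ^ α s) × ZMod (p ^ α s)),
        ∀ s : ℕ,
          (∀ ω : ZMod (p ^ α s), ∃ c : ZMod (p ^ α s),
            ∀ t : ZMod (p ^ α s), (t, t * ω + c) ∈ K s) ∧
          (Nat.card (K s) : ℝ) / (p : ℝ) ^ (2 * α s) ≤ (p : ℝ) ^ (-(s : ℤ)) := by
  have hp0 : 0 < p := hp.pos
  have : NeZero p := ⟨hp0.ne'⟩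
  refine ⟨fun s => s * p ^ s, strictMono_nat_of_lt_succ fun s => ?_,
    fun s => kakeyaSet p s (s * p ^ s),
    fun s => ⟨fun ω => ⟨kakeyaOffset p s (s * p ^ s) ω.val, fun t => ⟨(t, ω), rfl⟩⟩, ?_⟩⟩
  · calc s * p ^ s ≤ s * p ^ (s + 1) :=
          Nat.mul_le_mul_left s (Nat.pow_le_pow_right hp0 s.le_succ)
      _ < (s + 1) * p ^ (s + 1) := Nat.mul_lt_mul_of_pos_right s.lt_succ_self (by positivity)
  · set n := s * p ^ s
    have hsn : s ≤ n := Nat.le_mul_of_pos_right s (pow_pos hp0 s)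
    have hK : Nat.card (kakeyaSet p s n) ≤ p ^ n * p ^ (n - s) := by
      refine (Nat.card_range_prodMk_le
        (fun t ω : ZMod (p ^ n) => t * ω + kakeyaOffset p s n ω.val)
        (card_kakeyaSet_column_le le_rfl)).trans_eq ?_
      rw [Nat.card_zmod]
    have hcard : Nat.card (kakeyaSet p s n) * p ^ s ≤ p ^ (2 * n) := calc
      _ ≤ p ^ n * p ^ (n - s) * p ^ s := Nat.mul_le_mul_right _ hK
      _ = p ^ (2 * n) := by rw [mul_assoc, ← pow_add, ← pow_add]; congr 1; omega
    rw [zpow_neg, zpow_natCast, div_le_iff₀ (by positivity), inv_mul_eq_div,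
      le_div_iff₀ (by positivity)]
    exact_mod_cast hcard

/-- Kakeya-type sets of vanishing density over `ℤ/p^αℤ`: for every odd prime `p`
there are a strictly increasing sequence `α(s)` and sets
`K_s ⊆ (ℤ/p^{α(s)}ℤ)²` such that `K_s` contains, for every slope
`ω ∈ ℤ/p^{α(s)}ℤ`, a line `{(t, tω + c_ω) : t}`, and
`|K_s| / p^{2α(s)} ≤ p^{-s}`. -/
theorem stmt_15 (p : ℕ) (hp : p.Prime) (hodd : p ≠ 2) :
    ∃ α : ℕ → ℕ, StrictMono α ∧
      ∃ K : ∀ s : ℕ, Set (ZMod (p ^ α s) × ZMod (p ^ α s)),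
        ∀ s : ℕ,
          (∀ ω : ZMod (p ^ α s), ∃ c : ZMod (p ^ α s),
            ∀ t : ZMod (p ^ α s), (t, t * ω + c) ∈ K s) ∧
          (Nat.card (K s) : ℝ) / (p : ℝ) ^ (2 * α s) ≤ (p : ℝ) ^ (-(s : ℤ)) :=
  stmt_15_general p hp
end

section
/- Let p be an odd prime, α ≥ 1, and y = (y₁, y₂) ∈ (Z/p^αZ)². The number of solutions x = (x₁, x₂) ∈ (Z/p^αZ)² to the system x₁ + x₂ ≡ y₁ + y₂ and x₁² + x₂² ≡ y₁² + y₂² (mod p^α) is at most 2p·gcd(y₁ - y₂, p^α). -/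
private lemma stmt16_aux (p β α A B : ℕ) (hp : p.Prime) (hAB : p ^ α ∣ A * B)
    (hA : ¬ p ^ (β + 1) ∣ A) : p ^ (α - β) ∣ B := by
  have hA0 : A ≠ 0 := by rintro rfl; exact hA (dvd_zero _)
  rcases eq_or_ne B 0 with rfl | hB0
  · exact dvd_zero _
  have hfa : A.factorization p ≤ β := by
    by_contra hcon
    exact hA ((Nat.Prime.pow_dvd_iff_le_factorization hp hA0).mpr (by omega))
  have hfab : α ≤ (A * B).factorization p :=
    (Nat.Prime.pow_dvd_iff_le_factorization hp (mul_ne_zero hA0 hB0)).mp hAB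
  have hsum : (A * B).factorization p = A.factorization p + B.factorization p := by
    rw [Nat.factorization_mul hA0 hB0]; simp
  exact (Nat.Prime.pow_dvd_iff_le_factorization hp hB0).mpr (by omega)

/-- For `p` an odd prime and `y = (y₁,y₂) ∈ (ℤ/p^αℤ)²`, the number of solutions
`(x₁,x₂)` of `x₁+x₂ = y₁+y₂`, `x₁²+x₂² = y₁²+y₂²` in `(ℤ/p^αℤ)²` is at most
`2p·gcd(y₁-y₂, p^α)`. -/
theorem stmt_16 (p α : ℕ) (hp : p.Prime) (hodd : p ≠ 2) (hα : 1 ≤ α)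
    (y₁ y₂ : ZMod (p ^ α)) :
    Nat.card {x : ZMod (p ^ α) × ZMod (p ^ α) //
        x.1 + x.2 = y₁ + y₂ ∧ x.1 ^ 2 + x.2 ^ 2 = y₁ ^ 2 + y₂ ^ 2}
      ≤ 2 * p * Nat.gcd (y₁ - y₂).val (p ^ α) := by
  have hn0 : p ^ α ≠ 0 := pow_ne_zero _ hp.pos.ne'
  haveI hn : NeZero (p ^ α) := ⟨hn0⟩
  set d := y₁ - y₂ with hd
  set g := Nat.gcd d.val (p ^ α) with hg
  obtain ⟨β, hβα, hgβ⟩ := (Nat.dvd_prime_pow hp).mp (Nat.gcd_dvd_right d.val (p ^ α))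
  set m := p ^ (α - β) with hm
  have hmg : m * g = p ^ α := by
    rw [hm, hg, hgβ, ← pow_add]; congr 1; omega
  have hm0 : 0 < m := pow_pos hp.pos _
  have hg0 : 0 < g := Nat.gcd_pos_of_pos_right _ (Nat.pos_of_ne_zero hn0)
  haveI : NeZero g := ⟨hg0.ne'⟩
  -- dichotomy
  have dich : ∀ z : ZMod (p ^ α), z ^ 2 = d ^ 2 → m ∣ (z - d).val ∨ m ∣ (z + d).val := by
    intro z hz
    rcases eq_or_lt_of_le hβα with rfl | hβlt
    · left; rw [hm]; simp
    have hnd : p ^ α ∣ (z - d).val * (z + d).val := by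
      have hc : (((z - d).val * (z + d).val : ℕ) : ZMod (p ^ α)) = 0 := by
        push_cast
        simp only [ZMod.natCast_val, ZMod.cast_id]
        linear_combination hz
      exact (ZMod.natCast_eq_zero_iff _ _).mp hc
    have hnotboth : ¬ (p ^ (β + 1) ∣ (z - d).val ∧ p ^ (β + 1) ∣ (z + d).val) := by
      rintro ⟨ha, hb⟩
      have hDβ : ¬ p ^ (β + 1) ∣ d.val := by
        intro hD
        have h1 : p ^ (β + 1) ∣ g :=
          Nat.dvd_gcd hD (pow_dvd_pow p (by omega))
        rw [hg, hgβ] at h1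
        have hle : p ^ (β + 1) ≤ p ^ β := Nat.le_of_dvd (pow_pos hp.pos _) h1
        have hlt : p ^ β < p ^ (β + 1) := Nat.pow_lt_pow_right hp.one_lt (by omega)
        omega
      have hcong : ((z - d).val + 2 * d.val) ≡ (z + d).val [MOD p ^ α] := by
        rw [← ZMod.natCast_eq_natCast_iff]
        push_cast
        simp only [ZMod.natCast_val, ZMod.cast_id]
        ring
      have hdInt : ((p : ℤ) ^ (β + 1)) ∣ ((z + d).val : ℤ) - (((z - d).val : ℤ) + 2 * d.val) := by
        refine dvd_trans ?_ hcong.dvd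
        exact_mod_cast pow_dvd_pow p (by omega : β + 1 ≤ α)
      have h2D : ((p : ℤ) ^ (β + 1)) ∣ 2 * (d.val : ℤ) := by
        have haI : ((p : ℤ) ^ (β + 1)) ∣ ((z - d).val : ℤ) := by exact_mod_cast ha
        have hbI : ((p : ℤ) ^ (β + 1)) ∣ ((z + d).val : ℤ) := by exact_mod_cast hb
        have hcomb := dvd_sub (dvd_sub hbI hdInt) haI
        have heq : ((z + d).val : ℤ) - (((z + d).val : ℤ) - (((z - d).val : ℤ) + 2 * d.val))
            - ((z - d).val : ℤ) = 2 * (d.val : ℤ) := by ring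
        rwa [heq] at hcomb
      have h2DN : p ^ (β + 1) ∣ 2 * d.val := by exact_mod_cast h2D
      have hcop : Nat.Coprime (p ^ (β + 1)) 2 := by
        refine Nat.Coprime.pow_left _ ?_
        rw [hp.coprime_iff_not_dvd]
        intro hdvd
        exact hodd ((Nat.prime_dvd_prime_iff_eq hp Nat.prime_two).mp hdvd)
      exact hDβ (hcop.dvd_of_dvd_mul_left h2DN)
    rcases not_and_or.mp hnotboth with hca | hcb
    · right
      exact stmt16_aux p β α _ _ hp hnd hca
    · left
      exact stmt16_aux p β α _ _ hp (by rwa [mul_comm] at hnd) hcb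
  -- injectivity helper
  have key : ∀ w w' : ZMod (p ^ α), m ∣ w.val → m ∣ w'.val →
      ((w.val / m : ℕ) : ZMod g) = ((w'.val / m : ℕ) : ZMod g) → w = w' := by
    intro w w' hw hw' h
    have l1 : w.val / m < g := Nat.div_lt_of_lt_mul (by rw [hmg]; exact w.val_lt)
    have l2 : w'.val / m < g := Nat.div_lt_of_lt_mul (by rw [hmg]; exact w'.val_lt)
    have hval := congrArg ZMod.val h
    rw [ZMod.val_cast_of_lt l1, ZMod.val_cast_of_lt l2] at hval
    have hvv : w.val = w'.val := by
      rw [← Nat.div_mul_cancel hw, ← Nat.div_mul_cancel hw', hval]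
    exact ZMod.val_injective (p ^ α) hvv
  have h2 : IsUnit (2 : ZMod (p ^ α)) := by
    have : IsUnit ((2 : ℕ) : ZMod (p ^ α)) := by
      rw [ZMod.isUnit_iff_coprime]
      refine Nat.Coprime.pow_right _ ?_
      rw [Nat.coprime_comm, hp.coprime_iff_not_dvd]
      intro hdvd
      exact hodd ((Nat.prime_dvd_prime_iff_eq hp Nat.prime_two).mp hdvd)
    simpa using this
  have stepA : Nat.card {x : ZMod (p ^ α) × ZMod (p ^ α) //
        x.1 + x.2 = y₁ + y₂ ∧ x.1 ^ 2 + x.2 ^ 2 = y₁ ^ 2 + y₂ ^ 2}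
      ≤ Nat.card {z : ZMod (p ^ α) // z ^ 2 = d ^ 2} := by
    refine Nat.card_le_card_of_injective
      (fun x => ⟨x.1.1 - x.1.2, ?_⟩) ?_
    · rw [hd]
      linear_combination 2 * x.2.2 - (x.1.1 + x.1.2 + y₁ + y₂) * x.2.1
    · rintro ⟨⟨a₁, a₂⟩, ha1, ha2⟩ ⟨⟨b₁, b₂⟩, hb1, hb2⟩ hab
      simp only [Subtype.mk.injEq] at hab
      have hsum : a₁ + a₂ = b₁ + b₂ := by rw [ha1, hb1]
      have h1 : (2 : ZMod (p ^ α)) * a₁ = 2 * b₁ := by linear_combination hab + hsum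
      have e1 : a₁ = b₁ := h2.mul_left_cancel h1
      have e2 : a₂ = b₂ := by linear_combination hsum - e1
      simp [e1, e2]
  have stepB : Nat.card {z : ZMod (p ^ α) // z ^ 2 = d ^ 2} ≤ 2 * g := by
    have hB : Nat.card {z : ZMod (p ^ α) // z ^ 2 = d ^ 2} ≤ Nat.card (Bool × ZMod g) := by
      refine Nat.card_le_card_of_injective
        (fun z => if m ∣ ((z : ZMod (p ^ α)) - d).val
          then (true, (((z : ZMod (p ^ α)) - d).val / m : ℕ))
          else (false, (((z : ZMod (p ^ α)) + d).val / m : ℕ))) ?_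
      rintro ⟨z, hz⟩ ⟨z', hz'⟩ h
      simp only at h
      by_cases h1 : m ∣ (z - d).val <;> by_cases h2' : m ∣ (z' - d).val <;>
        simp only [h1, h2', if_true, if_false, if_pos, if_neg, not_false_iff,
          Prod.mk.injEq] at h
      · have := key _ _ h1 h2' h.2
        exact Subtype.ext (by linear_combination this)
      · exact absurd h.1 (by simp)
      · exact absurd h.1 (by simp)
      · have hb1 : m ∣ (z + d).val := (dich z hz).resolve_left h1
        have hb2 : m ∣ (z' + d).val := (dich z' hz').resolve_left h2'
        have := key _ _ hb1 hb2 h.2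
        exact Subtype.ext (by linear_combination this)
    calc Nat.card {z : ZMod (p ^ α) // z ^ 2 = d ^ 2} ≤ Nat.card (Bool × ZMod g) := hB
      _ = 2 * g := by simp [Nat.card_prod, Nat.card_zmod]
  calc Nat.card {x : ZMod (p ^ α) × ZMod (p ^ α) //
        x.1 + x.2 = y₁ + y₂ ∧ x.1 ^ 2 + x.2 ^ 2 = y₁ ^ 2 + y₂ ^ 2}
      ≤ 2 * g := le_trans stepA stepB
    _ ≤ 2 * p * g := by
        have hp1 := hp.pos
        calc 2 * g = 2 * 1 * g := by ring
          _ ≤ 2 * p * g := Nat.mul_le_mul_right g (by omega)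
end
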